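/- Let P be a partial extractor built from All, Atom, Union, Intersect, Complement, and Hole, annotated with goals by the inference rules: root gets (Φ_out, Φ_out); a child of Union with parent goal (Φ⁻,Φ⁺) gets (∅, Φ⁺); a child of Intersect gets (Φ⁻, U); the child of Complement gets (U\Φ⁺, U\Φ⁻). If some complete subterm Q of P with inferred goal φ_Q satisfies ⟦Q⟧(U) inconsistent with φ_Q, then no completion C of P satisfies ⟦C⟧(U) = Φ_out. -/
import Mathlib


inductive Extractor (α : Type*) where
  | all : Extractor α
  | atom : (α → Prop) → Extractor α
  | union : Extractor α → Extractor α → Extractor α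
  | inter : Extractor α → Extractor α → Extractor α
  | compl : Extractor α → Extractor α

def Extractor.denote {α : Type*} : Extractor α → Set α → Set α
  | .all, U => U
  | .atom p, U => {o ∈ U | p o}
  | .union e₁ e₂, U => e₁.denote U ∪ e₂.denote U
  | .inter e₁ e₂, U => e₁.denote U ∩ e₂.denote U
  | .compl e, U => U \ e.denote U

inductive PExtractor (α : Type*) where
  | hole : PExtractor α
  | all : PExtractor α
  | atom : (α → Prop) → PExtractor α
  | union : PExtractor α → PExtractor α → PExtractor α
  | inter : PExtractor α → PExtractor α → PExtractor α
  | compl : PExtractor α → PExtractor α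

/-- The embedding of complete extractors into partial extractors. -/
def Extractor.toPartial {α : Type*} : Extractor α → PExtractor α
  | .all => .all
  | .atom p => .atom p
  | .union e₁ e₂ => .union e₁.toPartial e₂.toPartial
  | .inter e₁ e₂ => .inter e₁.toPartial e₂.toPartial
  | .compl e => .compl e.toPartial

/-- `Completion P C` holds iff the complete extractor `C` is obtained from the
partial extractor `P` by replacing each hole with some complete extractor. -/
inductive Completion {α : Type*} : PExtractor α → Extractor α → Prop
  | hole (E : Extractor α) : Completion .hole E
  | all : Completion .all .all
  | atom (p : α → Prop) : Completion (.atom p) (.atom p)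
  | union {P₁ P₂ C₁ C₂} : Completion P₁ C₁ → Completion P₂ C₂ →
      Completion (.union P₁ P₂) (.union C₁ C₂)
  | inter {P₁ P₂ C₁ C₂} : Completion P₁ C₁ → Completion P₂ C₂ →
      Completion (.inter P₁ P₂) (.inter C₁ C₂)
  | compl {P C} : Completion P C → Completion (.compl P) (.compl C)

/-- `SubGoal U P φ Q ψ` holds iff `Q` is a subterm of `P` that receives goal
annotation `ψ` by the goal-inference rules, assuming `P` itself has goal `φ`:
a child of `Union` with parent goal `(Φ⁻, Φ⁺)` gets `(∅, Φ⁺)`, a child of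
`Intersect` gets `(Φ⁻, U)`, and the child of `Complement` gets `(U \ Φ⁺, U \ Φ⁻)`. -/
inductive SubGoal {α : Type*} (U : Set α) :
    PExtractor α → (Set α × Set α) → PExtractor α → (Set α × Set α) → Prop
  | refl (P : PExtractor α) (φ : Set α × Set α) : SubGoal U P φ P φ
  | unionL {P₁ P₂ Q φ ψ} : SubGoal U P₁ (∅, φ.2) Q ψ →
      SubGoal U (.union P₁ P₂) φ Q ψ
  | unionR {P₁ P₂ Q φ ψ} : SubGoal U P₂ (∅, φ.2) Q ψ →
      SubGoal U (.union P₁ P₂) φ Q ψ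
  | interL {P₁ P₂ Q φ ψ} : SubGoal U P₁ (φ.1, U) Q ψ →
      SubGoal U (.inter P₁ P₂) φ Q ψ
  | interR {P₁ P₂ Q φ ψ} : SubGoal U P₂ (φ.1, U) Q ψ →
      SubGoal U (.inter P₁ P₂) φ Q ψ
  | compl {P₁ Q φ ψ} : SubGoal U P₁ (U \ φ.2, U \ φ.1) Q ψ →
      SubGoal U (.compl P₁) φ Q ψ

lemma Extractor.denote_subset {α : Type*} (E : Extractor α) (U : Set α) :
    E.denote U ⊆ U := by
  induction E with
  | all => exact subset_rfl
  | atom p => exact fun x hx => hx.1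
  | union e₁ e₂ ih₁ ih₂ => exact Set.union_subset ih₁ ih₂
  | inter e₁ e₂ ih₁ ih₂ => exact (Set.inter_subset_left).trans ih₁
  | compl e ih => exact Set.diff_subset

lemma completion_toPartial {α : Type*} {E D : Extractor α}
    (h : Completion E.toPartial D) : D = E := by
  induction E generalizing D with
  | all => cases h; rfl
  | atom p => cases h; rfl
  | union e₁ e₂ ih₁ ih₂ => cases h with
    | union h₁ h₂ => rw [ih₁ h₁, ih₂ h₂]
  | inter e₁ e₂ ih₁ ih₂ => cases h with
    | inter h₁ h₂ => rw [ih₁ h₁, ih₂ h₂]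
  | compl e ih => cases h with
    | compl h₁ => rw [ih h₁]

lemma subgoal_key {α : Type*} {U : Set α} {P Q : PExtractor α}
    {φ ψ : Set α × Set α} (hsub : SubGoal U P φ Q ψ) :
    ∀ C : Extractor α, Completion P C → φ.1 ⊆ C.denote U → C.denote U ⊆ φ.2 →
    ∃ D : Extractor α, Completion Q D ∧ ψ.1 ⊆ D.denote U ∧ D.denote U ⊆ ψ.2 := by
  induction hsub with
  | refl P φ => exact fun C hC h1 h2 => ⟨C, hC, h1, h2⟩
  | unionL h ih =>
    intro C hC h1 h2
    cases hC with
    | union hC₁ hC₂ =>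
      exact ih _ hC₁ (Set.empty_subset _)
        ((Set.subset_union_left).trans h2)
  | unionR h ih =>
    intro C hC h1 h2
    cases hC with
    | union hC₁ hC₂ =>
      exact ih _ hC₂ (Set.empty_subset _)
        ((Set.subset_union_right).trans h2)
  | interL h ih =>
    intro C hC h1 h2
    cases hC with
    | inter hC₁ hC₂ =>
      exact ih _ hC₁ (h1.trans Set.inter_subset_left)
        (Extractor.denote_subset _ _)
  | interR h ih =>
    intro C hC h1 h2
    cases hC with
    | inter hC₁ hC₂ =>
      exact ih _ hC₂ (h1.trans Set.inter_subset_right)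
        (Extractor.denote_subset _ _)
  | compl h ih =>
    intro C hC h1 h2
    cases hC with
    | compl hC₁ =>
      rename_i P₁' C₁
      apply ih _ hC₁
      · intro x hx
        by_contra hxc
        exact hx.2 (h2 ⟨hx.1, hxc⟩)
      · intro x hx
        refine ⟨Extractor.denote_subset _ _ hx, fun hx1 => ?_⟩
        exact (h1 hx1).2 hx
  
/-- Theorem 1 (soundness of goal-directed pruning), set-operator fragment:
if some complete subterm `Q` of `P` (with inferred goal `ψ`) has semantics
inconsistent with `ψ`, then no completion of `P` denotes `Φout`. -/
theorem goal_directed_pruning_sound {α : Type*} (U Φout : Set α)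
    (P Q : PExtractor α) (ψ : Set α × Set α) (E : Extractor α)
    (hQ : Q = E.toPartial)
    (hsub : SubGoal U P (Φout, Φout) Q ψ)
    (hincons : ¬ (ψ.1 ⊆ E.denote U ∧ E.denote U ⊆ ψ.2)) :
    ∀ C : Extractor α, Completion P C → C.denote U ≠ Φout := by
  intro C hC hden
  obtain ⟨D, hD, h1, h2⟩ := subgoal_key hsub C hC (by simp [hden]) (by simp [hden])
  subst hQ
  rw [completion_toPartial hD] at h1 h2
  exact hincons ⟨h1, h2⟩
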